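/- With D⁺ and ρ⁺ as in Brun's sieve (y_m = y^{(1−γ²)γ^{m−1}/2} with 0 < γ < 1), for every positive integer n one has ρ⁺(n) − 1_{P⁻(n)>y} ≤ ∑_{r ≥ 0} 1_{P⁻(n) > y_{2r+1}} · 2^{−(2r+1)} · 2^{2ω(n)}, where ω(n) is the number of distinct prime factors of n. -/

import Mathlib

open scoped Classical

/-- `d ∈ D⁺`: `d` is squarefree and, writing `d = p₁ ⋯ p_r` with
`p_r < ⋯ < p₁`, we have `p_m ≤ ys m` for all odd `m`. -/
def DPlus (ys : ℕ → ℝ) (d : ℕ) : Prop :=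
  Squarefree d ∧ ∀ m : ℕ, Odd m →
    ∀ hm : m - 1 < d.primeFactorsList.reverse.length,
      ((d.primeFactorsList.reverse.get ⟨m - 1, hm⟩ : ℕ) : ℝ) ≤ ys m

/-- Brun's sieve weight `ρ⁺(n) = ∑_{d ∣ n, d ∈ D⁺} μ(d)`. -/
noncomputable def rhoPlus (ys : ℕ → ℝ) (n : ℕ) : ℤ :=
  ∑ d ∈ n.divisors, if DPlus ys d then ArithmeticFunction.moebius d else 0

/-! A squarefree `d ∣ n` is determined by its set `s ⊆ P` of prime factors, `P` those of `n`,
and `μ d = (-1) ^ #s`. Since `∑_{s ⊆ P} (-1) ^ #s = [P = ∅]`, the excess `ρ⁺(n) - [n = 1]` is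
`-∑ (-1) ^ #s` over the sets `s` violating Brun's condition, which we split according to the
first `r` at which more than `2r` elements of `s` exceed `y_{2r+1}`. If some `p ∈ P` has
`p ≤ y_{2r+1}`, then `p ≤ y_m` for all `m ≤ 2r+1`, so adding or removing `p` does not change
whether `s` first fails at `r`, and the `r`-th piece cancels. Otherwise it is bounded by the
number `2 ^ ω(n)` of subsets, and it is empty unless `2r+1 ≤ ω(n)`. -/

open ArithmeticFunction Finset

noncomputable def countAbove (s : Finset ℕ) (t : ℝ) : ℕ := #(s.filter fun p : ℕ => t < p)

/-- Brun's condition `d ∈ D⁺`, read off the set `s` of prime factors of `d`. -/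
def BrunAdmissible (ys : ℕ → ℝ) (s : Finset ℕ) : Prop :=
  ∀ r : ℕ, countAbove s (ys (2 * r + 1)) < 2 * r + 1

def BrunFailsFirstAt (ys : ℕ → ℝ) (r : ℕ) (s : Finset ℕ) : Prop :=
  (∀ r' < r, countAbove s (ys (2 * r' + 1)) < 2 * r' + 1) ∧
    2 * r + 1 ≤ countAbove s (ys (2 * r + 1))

noncomputable def brunExcess (ys : ℕ → ℝ) (P : Finset ℕ) (r : ℕ) : ℤ :=
  -∑ s ∈ P.powerset with BrunFailsFirstAt ys r s, (-1) ^ #s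

theorem List.forall_not_get_iff_countP_le {α : Type*} {p : α → Bool} {L : List α}
    (hL : L.Pairwise (fun a b => p b → p a)) (k : ℕ) :
    (∀ hk : k < L.length, ¬ p (L.get ⟨k, hk⟩)) ↔ L.countP p ≤ k := by
  induction L generalizing k with
  | nil => simp
  | cons a L ih =>
    rw [List.pairwise_cons] at hL
    cases ha : p a
    · have hall : ∀ b ∈ a :: L, ¬ p b := by grind
      rw [List.countP_eq_zero.mpr hall]
      exact iff_of_true (fun _ => hall _ (List.get_mem _ _)) k.zero_le
    · cases k with
      | zero => simp [ha]
      | succ k => simpa [ha] using ih hL.2 k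

namespace Nat

theorem countP_primeFactorsList_reverse {d : ℕ} (hd : Squarefree d) (p : ℕ → Bool) :
    d.primeFactorsList.reverse.countP p = #{q ∈ d.primeFactors | p q} := by
  rw [List.countP_reverse, List.countP_eq_length_filter,
    ← List.toFinset_card_of_nodup (hd.nodup_primeFactorsList.filter _), List.toFinset_filter]
  rfl

theorem forall_get_primeFactorsList_reverse_le_iff {d : ℕ} (hd : Squarefree d) (t : ℝ)
    (k : ℕ) :
    (∀ hk : k < d.primeFactorsList.reverse.length,
        ((d.primeFactorsList.reverse.get ⟨k, hk⟩ : ℕ) : ℝ) ≤ t) ↔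
      countAbove d.primeFactors t ≤ k := by
  have hmono : d.primeFactorsList.reverse.Pairwise
      fun a b : ℕ => decide (t < b) → decide (t < a) :=
    (List.pairwise_reverse.mpr d.primeFactorsList_sorted.pairwise).imp fun hba hb => by
      simp only [decide_eq_true_eq] at hb ⊢
      exact hb.trans_le (by exact_mod_cast hba)
  simpa [countAbove, countP_primeFactorsList_reverse hd] using
    List.forall_not_get_iff_countP_le hmono k

theorem sum_divisors_filter_squarefree_primeFactors {M : Type*} [AddCommMonoid M] {n : ℕ}
    (hn : n ≠ 0) (g : Finset ℕ → M) :
    ∑ d ∈ n.divisors with Squarefree d, g d.primeFactors =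
      ∑ s ∈ n.primeFactors.powerset, g s := by
  refine sum_nbij' primeFactors (fun s => ∏ p ∈ s, p) ?_ ?_ ?_ ?_ fun _ _ => rfl
  · intro d hd
    obtain ⟨hdn, -⟩ := mem_filter.mp hd
    exact mem_powerset.mpr (primeFactors_mono (dvd_of_mem_divisors hdn) hn)
  · intro s hs
    have hprime : ∀ p ∈ s, p.Prime := fun p hp =>
      prime_of_mem_primeFactors (mem_powerset.mp hs hp)
    refine mem_filter.mpr ⟨mem_divisors.mpr ⟨?_, hn⟩, ?_⟩
    · exact (prod_dvd_prod_of_subset _ _ _ (mem_powerset.mp hs)).trans n.prod_primeFactors_dvd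
    · refine squarefree_prod_of_pairwise_isCoprime (fun p hp q hq hpq => ?_)
        fun p hp => (hprime p hp).squarefree
      exact coprime_iff_isRelPrime.mp ((coprime_primes (hprime p hp) (hprime q hq)).mpr hpq)
  · intro d hd
    exact prod_primeFactors_of_squarefree (mem_filter.mp hd).2
  · intro s hs
    exact primeFactors_prod fun p hp => prime_of_mem_primeFactors (mem_powerset.mp hs hp)

end Nat

theorem ArithmeticFunction.moebius_eq_neg_one_pow_card_primeFactors {d : ℕ}
    (hd : Squarefree d) : moebius d = (-1) ^ #d.primeFactors := by
  rw [moebius_apply_of_squarefree hd,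
    ← (cardDistinctFactors_eq_cardFactors_iff_squarefree hd.ne_zero).mpr hd,
    cardDistinctFactors_apply, ← List.card_toFinset]
  rfl

theorem dPlus_iff {ys : ℕ → ℝ} {d : ℕ} :
    DPlus ys d ↔ Squarefree d ∧ BrunAdmissible ys d.primeFactors := by
  refine and_congr_right fun hd => ⟨fun h r => ?_, fun h m ⟨r, hm⟩ => ?_⟩
  · exact Nat.lt_succ_of_le <| (Nat.forall_get_primeFactorsList_reverse_le_iff hd _ _).mp
      (h (2 * r + 1) (odd_two_mul_add_one r))
  · subst hm
    exact (Nat.forall_get_primeFactorsList_reverse_le_iff hd _ (2 * r)).mpr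
      (Nat.le_of_lt_succ (h r))

theorem rhoPlus_eq_sum_powerset (ys : ℕ → ℝ) {n : ℕ} (hn : n ≠ 0) :
    rhoPlus ys n = ∑ s ∈ n.primeFactors.powerset with BrunAdmissible ys s, (-1) ^ #s := by
  have hsq : rhoPlus ys n = ∑ d ∈ n.divisors with Squarefree d,
      if BrunAdmissible ys d.primeFactors then (-1) ^ #d.primeFactors else 0 := by
    rw [rhoPlus, sum_filter]
    refine sum_congr rfl fun d _ => ?_
    by_cases hd : Squarefree d
    · simp [dPlus_iff, hd, moebius_eq_neg_one_pow_card_primeFactors hd]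
    · simp [dPlus_iff, hd]
  rw [hsq, Nat.sum_divisors_filter_squarefree_primeFactors hn
    (fun s => if BrunAdmissible ys s then (-1) ^ #s else 0), sum_filter]

section Combinatorics

variable {ys : ℕ → ℝ} {r : ℕ} {s : Finset ℕ}

theorem BrunFailsFirstAt.two_mul_add_one_le_card (h : BrunFailsFirstAt ys r s) :
    2 * r + 1 ≤ #s :=
  h.2.trans (card_filter_le _ _)

theorem BrunFailsFirstAt.unique {r' : ℕ} (h : BrunFailsFirstAt ys r s)
    (h' : BrunFailsFirstAt ys r' s) : r = r' := by
  by_contra hne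
  rcases Nat.lt_or_gt_of_ne hne with hlt | hlt
  · exact (h'.1 r hlt).not_ge h.2
  · exact (h.1 r' hlt).not_ge h'.2

theorem not_brunAdmissible_iff : ¬ BrunAdmissible ys s ↔ ∃ r, BrunFailsFirstAt ys r s := by
  refine ⟨fun h => ?_, fun ⟨r, hr⟩ h => (h r).not_ge hr.2⟩
  have hex : ∃ r, 2 * r + 1 ≤ countAbove s (ys (2 * r + 1)) := by
    simpa [BrunAdmissible] using h
  exact ⟨Nat.find hex, fun r' hr' => not_le.mp (Nat.find_min hex hr'), Nat.find_spec hex⟩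

theorem sum_filter_not_brunAdmissible {M : Type*} [AddCommMonoid M] (P : Finset ℕ)
    (f : Finset ℕ → M) :
    ∑ s ∈ P.powerset with ¬ BrunAdmissible ys s, f s =
      ∑ r ∈ range #P, ∑ s ∈ P.powerset with BrunFailsFirstAt ys r s, f s := by
  rw [← sum_biUnion]
  · congr 1
    ext s
    simp only [mem_filter, mem_biUnion, mem_range, not_brunAdmissible_iff]
    constructor
    · rintro ⟨hs, r, hr⟩
      have := hr.two_mul_add_one_le_card.trans (card_le_card (mem_powerset.mp hs))
      exact ⟨r, by omega, hs, hr⟩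
    · rintro ⟨r, -, hs, hr⟩
      exact ⟨hs, r, hr⟩
  · intro r _ r' _ hne
    simp only [Function.onFun, disjoint_left, mem_filter]
    exact fun s hs hs' => hne (hs.2.unique hs'.2)

theorem sum_brunAdmissible_sub_eq_sum_brunExcess (P : Finset ℕ) :
    ∑ s ∈ P.powerset with BrunAdmissible ys s, (-1 : ℤ) ^ #s - (if P = ∅ then 1 else 0) =
      ∑ r ∈ range #P, brunExcess ys P r := by
  rw [← sum_powerset_neg_one_pow_card, ← sum_filter_add_sum_filter_not P.powerset
    (BrunAdmissible ys), sum_filter_not_brunAdmissible]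
  simp only [brunExcess, sum_neg_distrib]
  ring

theorem countAbove_insert_of_le {p : ℕ} {t : ℝ} (hp : (p : ℝ) ≤ t) :
    countAbove (insert p s) t = countAbove s t := by
  rw [countAbove, countAbove, filter_insert, if_neg hp.not_gt]

theorem brunFailsFirstAt_insert_iff {p : ℕ} (hp : ∀ r' ≤ r, (p : ℝ) ≤ ys (2 * r' + 1)) :
    BrunFailsFirstAt ys r (insert p s) ↔ BrunFailsFirstAt ys r s := by
  unfold BrunFailsFirstAt
  rw [countAbove_insert_of_le (hp r le_rfl)]
  refine and_congr_left' (forall₂_congr fun r' hr' => ?_)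
  rw [countAbove_insert_of_le (hp r' hr'.le)]

theorem brunExcess_eq_zero {P : Finset ℕ} {p : ℕ} (hpP : p ∈ P)
    (hp : ∀ r' ≤ r, (p : ℝ) ≤ ys (2 * r' + 1)) :
    brunExcess ys P r = 0 := by
  rw [brunExcess, neg_eq_zero, sum_filter, ← insert_erase hpP,
    sum_powerset_insert (notMem_erase p P), ← sum_add_distrib]
  refine sum_eq_zero fun s hs => ?_
  have hps : p ∉ s := fun h => notMem_erase p P (mem_powerset.mp hs h)
  rw [brunFailsFirstAt_insert_iff hp, card_insert_of_notMem hps, pow_succ]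
  split_ifs <;> ring

theorem brunExcess_le (P : Finset ℕ) :
    (brunExcess ys P r : ℝ) ≤ (2 : ℝ) ^ (-(2 * (r : ℤ) + 1)) * 2 ^ (2 * #P) := by
  rcases (P.powerset.filter (BrunFailsFirstAt ys r)).eq_empty_or_nonempty with h | ⟨s, hs⟩
  · rw [brunExcess, h, sum_empty, neg_zero, Int.cast_zero]
    positivity
  obtain ⟨hsP, hr⟩ := mem_filter.mp hs
  have hrP : 2 * r + 1 ≤ #P :=
    hr.two_mul_add_one_le_card.trans (card_le_card (mem_powerset.mp hsP))
  have hcount : brunExcess ys P r ≤ 2 ^ #P :=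
    calc _ ≤ |∑ s ∈ P.powerset with BrunFailsFirstAt ys r s, (-1 : ℤ) ^ #s| := neg_le_abs _
      _ ≤ ∑ s ∈ P.powerset with BrunFailsFirstAt ys r s, |(-1 : ℤ) ^ #s| :=
        abs_sum_le_sum_abs _ _
      _ = #(P.powerset.filter (BrunFailsFirstAt ys r)) := by simp
      _ ≤ #P.powerset := by exact_mod_cast card_le_card (filter_subset _ _)
      _ = 2 ^ #P := by exact_mod_cast card_powerset P
  calc (brunExcess ys P r : ℝ)
      ≤ 2 ^ #P := by exact_mod_cast hcount
    _ = (2 : ℝ) ^ (-(2 * (r : ℤ) + 1)) * 2 ^ ((2 * r + 1 : ℕ) : ℤ) * 2 ^ #P := by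
      rw [← zpow_add₀ two_ne_zero]
      push_cast
      simp
    _ ≤ (2 : ℝ) ^ (-(2 * (r : ℤ) + 1)) * 2 ^ (2 * #P) := by
      rw [zpow_natCast, mul_assoc, ← pow_add]
      gcongr _ * ?_
      exact pow_le_pow_right₀ one_le_two (by omega)

end Combinatorics

theorem antitoneOn_of_eq_rpow {y γ : ℝ} {ys : ℕ → ℝ} (hy : 1 ≤ y) (hγ : 0 ≤ γ) (hγ1 : γ ≤ 1)
    (hys : ∀ m : ℕ, 1 ≤ m → ys m = Real.rpow y ((1 - γ ^ 2) * γ ^ (m - 1) / 2)) :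
    AntitoneOn ys (Set.Ici 1) := by
  intro m hm m' hm' hmm'
  rw [hys m hm, hys m' hm']
  apply Real.rpow_le_rpow_of_exponent_le hy
  have : 0 ≤ 1 - γ ^ 2 := by nlinarith
  have : γ ^ (m' - 1) ≤ γ ^ (m - 1) := pow_le_pow_of_le_one hγ hγ1 (by omega)
  gcongr

theorem brunExcess_primeFactors_le {ys : ℕ → ℝ} (hys : AntitoneOn ys (Set.Ici 1)) {n : ℕ}
    (hn : n ≠ 0) (r : ℕ) :
    (brunExcess ys n.primeFactors r : ℝ) ≤
      (if ∀ p : ℕ, p.Prime → p ∣ n → ys (2 * r + 1) < (p : ℝ) then (1 : ℝ) else 0)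
        * (2 : ℝ) ^ (-(2 * (r : ℤ) + 1)) * (2 : ℝ) ^ (2 * #n.primeFactors) := by
  split_ifs with hbig
  · rw [one_mul]
    exact brunExcess_le _
  push Not at hbig
  obtain ⟨p, hp, hpn, hpy⟩ := hbig
  have hsmall : ∀ r' ≤ r, (p : ℝ) ≤ ys (2 * r' + 1) := fun r' hr' =>
    hpy.trans (hys (by simp) (by simp) (by omega))
  rw [brunExcess_eq_zero (Nat.mem_primeFactors.mpr ⟨hp, hpn, hn⟩) hsmall]
  simp

theorem summable_two_zpow_neg_two_mul_add_one :
    Summable fun r : ℕ => (2 : ℝ) ^ (-(2 * (r : ℤ) + 1)) := by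
  refine Summable.of_nonneg_of_le (fun r => by positivity) (fun r => ?_)
    (summable_geometric_of_lt_one (by norm_num : (0 : ℝ) ≤ 1 / 2) (by norm_num))
  rw [one_div, inv_pow, ← zpow_natCast, ← zpow_neg]
  exact zpow_le_zpow_right₀ one_le_two (by omega)

theorem brun_sieve_excess_bound (y γ : ℝ) (hy : 1 < y) (hγ : 0 < γ) (hγ1 : γ < 1)
    (ys : ℕ → ℝ)
    (hys : ∀ m : ℕ, 1 ≤ m → ys m = Real.rpow y ((1 - γ^2) * γ^(m-1) / 2)) :
    ∀ n : ℕ, 1 ≤ n →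
      ((rhoPlus ys n : ℝ) - (if ∀ p : ℕ, p.Prime → p ∣ n → y < (p : ℝ) then 1 else 0))
        ≤ ∑' r : ℕ,
            (if ∀ p : ℕ, p.Prime → p ∣ n → ys (2*r+1) < (p : ℝ) then (1:ℝ) else 0)
              * (2:ℝ) ^ (-(2 * (r:ℤ) + 1)) * (2:ℝ) ^ (2 * n.primeFactors.card) := by
  intro n hn
  have hn0 : n ≠ 0 := by omega
  have hsummable : Summable fun r : ℕ =>
      (if ∀ p : ℕ, p.Prime → p ∣ n → ys (2*r+1) < (p : ℝ) then (1:ℝ) else 0)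
        * (2:ℝ) ^ (-(2 * (r:ℤ) + 1)) * (2:ℝ) ^ (2 * n.primeFactors.card) :=
    (summable_two_zpow_neg_two_mul_add_one.mul_right (2 ^ (2 * #n.primeFactors))).of_nonneg_of_le
      (fun r => by positivity) (fun r => by split_ifs <;> simp; positivity)
  have hunit : (if n.primeFactors = ∅ then 1 else 0 : ℝ) ≤
      if ∀ p : ℕ, p.Prime → p ∣ n → y < (p : ℝ) then 1 else 0 := by
    split_ifs with h1 h2 <;> norm_num
    exact h2 fun p hp hpn => absurd (Nat.mem_primeFactors.mpr ⟨hp, hpn, hn0⟩) (h1 ▸ notMem_empty p)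
  calc _ ≤ ((rhoPlus ys n - if n.primeFactors = ∅ then 1 else 0 : ℤ) : ℝ) := by
        push_cast
        linarith
    _ = ∑ r ∈ range #n.primeFactors, (brunExcess ys n.primeFactors r : ℝ) := by
        rw [rhoPlus_eq_sum_powerset ys hn0, sum_brunAdmissible_sub_eq_sum_brunExcess, Int.cast_sum]
    _ ≤ _ := (sum_le_sum fun r _ =>
          brunExcess_primeFactors_le (antitoneOn_of_eq_rpow hy.le hγ.le hγ1.le hys) hn0 r).trans
        (hsummable.sum_le_tsum _ fun r _ => by positivity)
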